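/- arXiv:1304.1562 — 7 statements merged into one kernel-verified Lean document; each statement's English description precedes it below -/
import Mathlib

section
/- Let a, b₁, b₂ : [0,∞) → ℝ be continuous and uniformly bounded with b₁(t) ≤ b₂(t) for all t, and suppose a(t) ≥ a₀ for some constant a₀ > 0. If A₀ > sup_{t≥0} b₂(t), then the solution of the Riccati equation dA/dt = a(t) (A − b₁(t)) (A − b₂(t)), A(0) = A₀, blows up in finite time; in particular, there is no differentiable function A : [0,∞) → ℝ satisfying this equation on all of [0,∞) with A(0) = A₀. -/
/-!
Let `M = sup b₂`. While `A > M` both factors `A - b₁`, `A - b₂` are at least `A - M > 0`, so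
`A' ≥ a₀ (A - M)² ≥ 0`; hence `A` can never come down to `M`. Then `u = 1 / (A - M)` is positive
with `u' ≤ -a₀`, so `u(t) ≤ u(0) - a₀ t` turns negative by time `u(0) / a₀`.
-/

open Set

section DifferentialInequalities

variable {f f' : ℝ → ℝ} {x₀ M : ℝ}

theorem forall_Ici_lt_of_deriv_nonneg_above (hf : ContinuousOn f (Ici x₀))
    (hf' : ∀ t ∈ Ioi x₀, HasDerivAt f (f' t) t) (h₀ : M < f x₀)
    (hpos : ∀ t ∈ Ioi x₀, M < f t → 0 ≤ f' t) : ∀ t ∈ Ici x₀, M < f t := by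
  by_contra! hex
  obtain ⟨t₁, ht₁, hft₁⟩ := hex
  set S : Set ℝ := Ici x₀ ∩ f ⁻¹' Iic M
  have hSbdd : BddBelow S := ⟨x₀, fun _ hx => hx.1⟩
  obtain ⟨hs₀, hfs⟩ : sInf S ∈ S :=
    (hf.preimage_isClosed_of_isClosed isClosed_Ici isClosed_Iic).csInf_mem ⟨t₁, ht₁, hft₁⟩ hSbdd
  set s := sInf S
  have hbefore : ∀ t ∈ Ico x₀ s, M < f t := fun t ht =>
    not_le.1 fun hle => (csInf_le hSbdd ⟨ht.1, hle⟩).not_gt ht.2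
  have hmono : MonotoneOn f (Icc x₀ s) := by
    refine monotoneOn_of_hasDerivWithinAt_nonneg (convex_Icc x₀ s) (hf.mono Icc_subset_Ici_self)
      (f' := f') (fun t ht => ?_) (fun t ht => ?_) <;> rw [interior_Icc] at ht
    · exact (hf' t ht.1).hasDerivWithinAt
    · exact hpos t ht.1 (hbefore t (Ioo_subset_Ico_self ht))
  exact (h₀.trans_le (hmono (left_mem_Icc.2 hs₀) (right_mem_Icc.2 hs₀) hs₀)).not_ge hfs

theorem antitoneOn_inv_sub_add_mul {a₀ : ℝ} (hf : ContinuousOn f (Ici x₀))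
    (hf' : ∀ t ∈ Ioi x₀, HasDerivAt f (f' t) t) (hM : ∀ t ∈ Ici x₀, M < f t)
    (hsq : ∀ t ∈ Ioi x₀, a₀ * (f t - M) ^ 2 ≤ f' t) :
    AntitoneOn (fun t => (f t - M)⁻¹ + a₀ * t) (Ici x₀) := by
  have hne : ∀ t ∈ Ici x₀, f t - M ≠ 0 := fun t ht => (sub_pos.2 (hM t ht)).ne'
  refine antitoneOn_of_hasDerivWithinAt_nonpos (convex_Ici x₀)
    (((hf.sub continuousOn_const).inv₀ hne).add (continuousOn_const.mul continuousOn_id))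
    (f' := fun t => -f' t / (f t - M) ^ 2 + a₀) (fun t ht => ?_) (fun t ht => ?_) <;>
    rw [interior_Ici] at ht
  · exact ((((hf' t ht).sub_const M).inv (hne t (mem_Ici_of_Ioi ht))).add
      ((hasDerivAt_id t).const_mul a₀ |>.congr_deriv (mul_one a₀))).hasDerivWithinAt
  · have hsq_pos : 0 < (f t - M) ^ 2 := pow_pos (sub_pos.2 (hM t (mem_Ici_of_Ioi ht))) 2
    rw [neg_div, neg_add_nonpos_iff, le_div_iff₀ hsq_pos]
    exact hsq t ht

theorem false_of_sq_le_deriv {a₀ : ℝ} (ha₀ : 0 < a₀) (hf : ContinuousOn f (Ici x₀))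
    (hf' : ∀ t ∈ Ioi x₀, HasDerivAt f (f' t) t) (h₀ : M < f x₀)
    (hsq : ∀ t ∈ Ioi x₀, M < f t → a₀ * (f t - M) ^ 2 ≤ f' t) : False := by
  have hM := forall_Ici_lt_of_deriv_nonneg_above hf hf' h₀ fun t ht hMt =>
    (mul_nonneg ha₀.le (sq_nonneg _)).trans (hsq t ht hMt)
  have hanti := antitoneOn_inv_sub_add_mul hf hf' hM fun t ht => hsq t ht (hM t (mem_Ici_of_Ioi ht))
  set T := x₀ + (f x₀ - M)⁻¹ / a₀
  have hT : x₀ ≤ T := le_add_of_nonneg_right (by have := sub_pos.2 h₀; positivity)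
  have hdecay : (f T - M)⁻¹ + a₀ * T ≤ (f x₀ - M)⁻¹ + a₀ * x₀ := hanti self_mem_Ici hT hT
  have hpos : 0 < (f T - M)⁻¹ := inv_pos.2 (sub_pos.2 (hM T hT))
  have hcancel : a₀ * T = a₀ * x₀ + (f x₀ - M)⁻¹ := by
    rw [mul_add, mul_div_cancel₀ _ ha₀.ne']
  linarith

end DifferentialInequalities

theorem sq_sub_mul_le_mul_sub_mul_sub {a a₀ b₁ b₂ M x : ℝ} (ha₀ : 0 ≤ a₀) (ha : a₀ ≤ a)
    (hb₁ : b₁ ≤ M) (hb₂ : b₂ ≤ M) (hx : M < x) :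
    a₀ * (x - M) ^ 2 ≤ a * (x - b₁) * (x - b₂) := by
  have hprod : (x - M) ^ 2 ≤ (x - b₁) * (x - b₂) := by
    rw [sq]; exact mul_le_mul (by linarith) (by linarith) (by linarith) (by linarith)
  calc a₀ * (x - M) ^ 2 ≤ a * (x - M) ^ 2 := by gcongr
    _ ≤ a * ((x - b₁) * (x - b₂)) := by gcongr; linarith
    _ = a * (x - b₁) * (x - b₂) := by ring

theorem riccati_blowup_general
    (a b₁ b₂ : ℝ → ℝ) (a₀ : ℝ) (ha₀ : 0 < a₀)
    (hbdd : ∃ C, ∀ t ∈ Ici (0 : ℝ), |a t| ≤ C ∧ |b₁ t| ≤ C ∧ |b₂ t| ≤ C)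
    (hb₁b₂ : ∀ t ∈ Ici (0 : ℝ), b₁ t ≤ b₂ t)
    (haa₀ : ∀ t ∈ Ici (0 : ℝ), a₀ ≤ a t)
    (A₀ : ℝ) (hA₀ : A₀ > ⨆ t : Ici (0 : ℝ), b₂ t) :
    ¬ ∃ A : ℝ → ℝ, A 0 = A₀ ∧ ContinuousOn A (Ici 0) ∧
      ∀ t ∈ Ioi (0 : ℝ), HasDerivAt A (a t * (A t - b₁ t) * (A t - b₂ t)) t := by
  rintro ⟨A, hA0, hAc, hA'⟩
  obtain ⟨C, hC⟩ := hbdd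
  have hb₂M : ∀ t ∈ Ici (0 : ℝ), b₂ t ≤ ⨆ t : Ici (0 : ℝ), b₂ t := fun t ht =>
    le_ciSup (f := fun t : Ici (0 : ℝ) => b₂ t)
      ⟨C, by rintro _ ⟨t, rfl⟩; exact (le_abs_self _).trans (hC t t.2).2.2⟩ ⟨t, ht⟩
  refine false_of_sq_le_deriv ha₀ hAc hA' (hA0 ▸ hA₀) fun t ht hMt => ?_
  exact sq_sub_mul_le_mul_sub_mul_sub ha₀.le (haa₀ t (mem_Ici_of_Ioi ht))
    ((hb₁b₂ t (mem_Ici_of_Ioi ht)).trans (hb₂M t (mem_Ici_of_Ioi ht))) (hb₂M t (mem_Ici_of_Ioi ht)) hMt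

/-- Let `a, b₁, b₂ : [0,∞) → ℝ` be continuous and uniformly bounded with
`b₁(t) ≤ b₂(t)` and `a(t) ≥ a₀ > 0`. If `A₀ > sup_{t ≥ 0} b₂(t)`, then the solution of the
Riccati equation `dA/dt = a(t)(A − b₁(t))(A − b₂(t))`, `A(0) = A₀`, blows up in finite time;
in particular there is no differentiable `A : [0,∞) → ℝ` satisfying it on all of `[0,∞)`. -/
theorem riccati_blowup
    (a b₁ b₂ : ℝ → ℝ) (a₀ : ℝ) (ha₀ : 0 < a₀)
    (hacont : ContinuousOn a (Ici 0)) (hb₁cont : ContinuousOn b₁ (Ici 0))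
    (hb₂cont : ContinuousOn b₂ (Ici 0))
    (hbdd : ∃ C, ∀ t ∈ Ici (0 : ℝ), |a t| ≤ C ∧ |b₁ t| ≤ C ∧ |b₂ t| ≤ C)
    (hb₁b₂ : ∀ t ∈ Ici (0 : ℝ), b₁ t ≤ b₂ t)
    (haa₀ : ∀ t ∈ Ici (0 : ℝ), a₀ ≤ a t)
    (A₀ : ℝ) (hA₀ : A₀ > ⨆ t : Ici (0 : ℝ), b₂ t) :
    ¬ ∃ A : ℝ → ℝ, A 0 = A₀ ∧ ContinuousOn A (Ici 0) ∧
      ∀ t ∈ Ioi (0 : ℝ), HasDerivAt A (a t * (A t - b₁ t) * (A t - b₂ t)) t :=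
  riccati_blowup_general a b₁ b₂ a₀ ha₀ hbdd hb₁b₂ haa₀ A₀ hA₀
end

section
/- Let a, b₁, b₂ : [0,∞) → ℝ be continuous and uniformly bounded with a(t) > 0 and b₁(t) ≤ b₂(t) for all t. Suppose there exists a constant b̄ such that b₁(t) ≤ b̄ ≤ b₂(t) for all t ≥ 0, and let A₀ ≤ b̄. Then the Riccati equation dA/dt = a(t) (A − b₁(t)) (A − b₂(t)), A(0) = A₀, admits a unique global solution A : [0,∞) → ℝ, and this solution is bounded, satisfying min{ A₀, inf_{t≥0} b₁(t) } ≤ A(t) ≤ b̄ for all t ≥ 0. -/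
/-!
Let `m = min A₀ (inf b₁)`. Clamping the state to `[m, bbar]` turns the Riccati field into one that
is bounded and globally Lipschitz in the state, so Picard–Lindelöf on `[0, n]` together with
Grönwall uniqueness glues to a solution on `[0, ∞)`. At the ends of the interval the field points
inward: `a (bbar - b₁) (bbar - b₂) ≤ 0` and `a (m - b₁) (m - b₂) ≥ 0`. Hence the clamped solution
never leaves `[m, bbar]`, where the clamp is the identity, so it solves the original equation.
Uniqueness holds because on a compact time interval both solutions are bounded and the field is
Lipschitz on bounded sets.
-/

open Set Metric
open scoped NNReal Topology

section ODE

variable {E : Type*} [NormedAddCommGroup E] [NormedSpace ℝ E] {v : ℝ → E → E}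

theorem ODE_solution_unique_of_mem_Icc_right_of_locallyLipschitz {f g : ℝ → E} {a b : ℝ}
    (hv : ∀ R, ∃ K, ∀ t ∈ Ico a b, LipschitzOnWith K (v t) (closedBall 0 R))
    (hf : ContinuousOn f (Icc a b))
    (hf' : ∀ t ∈ Ico a b, HasDerivWithinAt f (v t (f t)) (Ici t) t)
    (hg : ContinuousOn g (Icc a b))
    (hg' : ∀ t ∈ Ico a b, HasDerivWithinAt g (v t (g t)) (Ici t) t)
    (ha : f a = g a) :
    EqOn f g (Icc a b) := by
  obtain ⟨Rf, hRf⟩ := isCompact_Icc.exists_bound_of_continuousOn hf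
  obtain ⟨Rg, hRg⟩ := isCompact_Icc.exists_bound_of_continuousOn hg
  obtain ⟨K, hK⟩ := hv (max Rf Rg)
  refine ODE_solution_unique_of_mem_Icc_right hK hf hf' (fun t ht ↦ ?_) hg hg' (fun t ht ↦ ?_)
    ha
  · exact mem_closedBall_zero_iff.2 ((hRf t (Ico_subset_Icc_self ht)).trans (le_max_left _ _))
  · exact mem_closedBall_zero_iff.2 ((hRg t (Ico_subset_Icc_self ht)).trans (le_max_right _ _))

theorem ODE_solution_unique_Ici_of_locallyLipschitz {f g : ℝ → E}
    (hv : ∀ R, ∃ K, ∀ t ∈ Ici (0 : ℝ), LipschitzOnWith K (v t) (closedBall 0 R))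
    (hf : ∀ t ∈ Ici (0 : ℝ), HasDerivWithinAt f (v t (f t)) (Ici 0) t)
    (hg : ∀ t ∈ Ici (0 : ℝ), HasDerivWithinAt g (v t (g t)) (Ici 0) t)
    (h0 : f 0 = g 0) :
    EqOn f g (Ici 0) := fun _ ht ↦
  ODE_solution_unique_of_mem_Icc_right_of_locallyLipschitz
    (fun R ↦ (hv R).imp fun _ hK s hs ↦ hK s hs.1)
    (fun s hs ↦ (hf s hs.1).continuousWithinAt.mono Icc_subset_Ici_self)
    (fun s hs ↦ (hf s hs.1).mono (Ici_subset_Ici.2 hs.1))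
    (fun s hs ↦ (hg s hs.1).continuousWithinAt.mono Icc_subset_Ici_self)
    (fun s hs ↦ (hg s hs.1).mono (Ici_subset_Ici.2 hs.1)) h0 ⟨ht, le_rfl⟩

theorem exists_forall_mem_Icc_hasDerivWithinAt_of_lipschitzWith [CompleteSpace E] {K L : ℝ≥0}
    (hlip : ∀ t ∈ Ici (0 : ℝ), LipschitzWith K (v t))
    (hcont : ∀ x, ContinuousOn (v · x) (Ici 0))
    (hbdd : ∀ t ∈ Ici (0 : ℝ), ∀ x, ‖v t x‖ ≤ L) (x₀ : E) (T : ℝ≥0) :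
    ∃ α : ℝ → E, α 0 = x₀ ∧
      ∀ t ∈ Icc 0 (T : ℝ), HasDerivWithinAt α (v t (α t)) (Icc 0 T) t := by
  have hpl : IsPicardLindelof v (tmin := 0) (tmax := T) ⟨0, le_rfl, T.2⟩ x₀ (L * T) 0 L K :=
    { lipschitzOnWith := fun t ht ↦ (hlip t ht.1).lipschitzOnWith
      continuousOn := fun x _ ↦ (hcont x).mono Icc_subset_Ici_self
      norm_le := fun t ht x _ ↦ hbdd t ht.1 x
      mul_max_le := by simp }
  exact hpl.exists_eq_forall_mem_Icc_hasDerivWithinAt₀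

theorem hasDerivWithinAt_Ici_of_forall_mem_Icc {α : ℕ → ℝ → E}
    (hcompat : ∀ k l : ℕ, ∀ t ∈ Icc (0 : ℝ) (min k l), α k t = α l t)
    (hα : ∀ n : ℕ, ∀ t ∈ Icc (0 : ℝ) n, HasDerivWithinAt (α n) (v t (α n t)) (Icc 0 n) t)
    {t : ℝ} (ht : t ∈ Ici 0) :
    HasDerivWithinAt (fun s ↦ α (⌊s⌋₊ + 1) s) (v t (α (⌊t⌋₊ + 1) t)) (Ici 0) t := by
  set N := ⌊t⌋₊ + 1
  have htN : t < N := by simpa [N] using Nat.lt_floor_add_one t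
  have hnhds : Icc (0 : ℝ) N ∈ 𝓝[Ici 0] t := by
    rw [← Ici_inter_Iic]
    exact inter_mem_nhdsWithin _ (Iic_mem_nhds htN)
  have hglue : ∀ s ∈ Icc (0 : ℝ) N, α (⌊s⌋₊ + 1) s = α N s := fun s hs ↦
    hcompat _ _ s ⟨hs.1, le_min (by exact_mod_cast (Nat.lt_floor_add_one s).le) hs.2⟩
  exact ((hα N t ⟨ht, htN.le⟩).mono_of_mem_nhdsWithin hnhds).congr_of_eventuallyEq
    (Filter.eventuallyEq_of_mem hnhds hglue) rfl

theorem exists_forall_mem_Ici_hasDerivWithinAt_of_lipschitzWith [CompleteSpace E] {K L : ℝ≥0}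
    (hlip : ∀ t ∈ Ici (0 : ℝ), LipschitzWith K (v t))
    (hcont : ∀ x, ContinuousOn (v · x) (Ici 0))
    (hbdd : ∀ t ∈ Ici (0 : ℝ), ∀ x, ‖v t x‖ ≤ L) (x₀ : E) :
    ∃ f : ℝ → E, f 0 = x₀ ∧ ∀ t ∈ Ici (0 : ℝ), HasDerivWithinAt f (v t (f t)) (Ici 0) t := by
  choose α hα0 hα using fun n : ℕ ↦
    exists_forall_mem_Icc_hasDerivWithinAt_of_lipschitzWith hlip hcont hbdd x₀ n
  have hα_Ici :
      ∀ n : ℕ, ∀ t ∈ Ico (0 : ℝ) n, HasDerivWithinAt (α n) (v t (α n t)) (Ici t) t :=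
    fun n t ht ↦ (hα n t (Ico_subset_Icc_self ht)).mono_of_mem_nhdsWithin <|
      Filter.mem_of_superset (Icc_mem_nhdsGE ht.2) (Icc_subset_Icc_left ht.1)
  have hcompat : ∀ k l : ℕ, ∀ t ∈ Icc (0 : ℝ) (min k l), α k t = α l t := fun k l ↦
    ODE_solution_unique_of_mem_Icc_right_of_locallyLipschitz
      (fun _ ↦ ⟨K, fun t ht ↦ (hlip t ht.1).lipschitzOnWith⟩)
      ((HasDerivWithinAt.continuousOn (hα k)).mono (Icc_subset_Icc_right (min_le_left _ _)))
      (fun t ht ↦ hα_Ici k t ⟨ht.1, ht.2.trans_le (min_le_left _ _)⟩)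
      ((HasDerivWithinAt.continuousOn (hα l)).mono (Icc_subset_Icc_right (min_le_right _ _)))
      (fun t ht ↦ hα_Ici l t ⟨ht.1, ht.2.trans_le (min_le_right _ _)⟩)
      ((hα0 k).trans (hα0 l).symm)
  exact ⟨fun s ↦ α (⌊s⌋₊ + 1) s, hα0 _,
    fun t ht ↦ hasDerivWithinAt_Ici_of_forall_mem_Icc hcompat hα ht⟩

end ODE

theorem image_le_of_deriv_right_nonpos_above {f f' : ℝ → ℝ} {a b c : ℝ}
    (hf : ContinuousOn f (Icc a b)) (hf' : ∀ x ∈ Ico a b, HasDerivWithinAt f (f' x) (Ici x) x)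
    (ha : f a ≤ c) (hc : ∀ x ∈ Ico a b, c < f x → f' x ≤ 0) :
    ∀ ⦃x⦄, x ∈ Icc a b → f x ≤ c := by
  intro x hx
  by_contra! hlt
  have hxa : 0 < x - a + 1 := by linarith [hx.1]
  set ε := (f x - c) / (2 * (x - a + 1))
  have hε : 0 < ε := div_pos (by linarith) (by positivity)
  -- Tilting the barrier `c` by the slope `ε` makes the fencing inequality strict.
  have hB : ∀ y, HasDerivAt (fun y ↦ c + ε * (y - a + 1)) ε y := fun y ↦ by
    simpa using ((((hasDerivAt_id y).sub_const a).add_const 1).const_mul ε).const_add c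
  have hfence : f x ≤ c + ε * (x - a + 1) :=
    image_le_of_deriv_right_lt_deriv_boundary hf hf'
      (by simpa using ha.trans (le_add_of_nonneg_right hε.le)) hB
      (fun y hy hfy ↦ (hc y hy <| hfy ▸ lt_add_of_pos_right c
        (mul_pos hε (by linarith [hy.1]))).trans_lt hε) hx
  have : ε * (x - a + 1) = (f x - c) / 2 := by simp only [ε]; field_simp
  linarith

theorem mem_Icc_of_hasDerivWithinAt_projIcc {v : ℝ → ℝ → ℝ} {lo hi : ℝ} (h : lo ≤ hi)
    {A : ℝ → ℝ}
    (hA : ∀ t ∈ Ici (0 : ℝ), HasDerivWithinAt A (v t (projIcc lo hi h (A t))) (Ici 0) t)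
    (h0 : A 0 ∈ Icc lo hi) (hlo : ∀ t ∈ Ici (0 : ℝ), 0 ≤ v t lo)
    (hhi : ∀ t ∈ Ici (0 : ℝ), v t hi ≤ 0) {t : ℝ} (ht : t ∈ Ici 0) :
    A t ∈ Icc lo hi := by
  have hcont : ContinuousOn A (Icc 0 t) := fun s hs ↦
    (hA s hs.1).continuousWithinAt.mono Icc_subset_Ici_self
  have hA' : ∀ s ∈ Ico 0 t, HasDerivWithinAt A (v s (projIcc lo hi h (A s))) (Ici s) s :=
    fun s hs ↦ (hA s hs.1).mono (Ici_subset_Ici.2 hs.1)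
  constructor
  · have := image_le_of_deriv_right_nonpos_above (f := fun s ↦ -A s) hcont.neg
      (fun s hs ↦ (hA' s hs).neg) (neg_le_neg h0.1) (fun s hs hlt ↦ ?_) ⟨ht, le_rfl⟩
    · linarith
    · rw [projIcc_of_le_left h (by linarith)]
      simpa using hlo s hs.1
  · refine image_le_of_deriv_right_nonpos_above hcont hA' h0.2 (fun s hs hlt ↦ ?_) ⟨ht, le_rfl⟩
    rw [projIcc_of_right_le h hlt.le]
    exact hhi s hs.1

theorem LipschitzOnWith.comp_projIcc {f : ℝ → ℝ} {K : ℝ≥0} {lo hi : ℝ} (h : lo ≤ hi)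
    (hf : LipschitzOnWith K f (Icc lo hi)) :
    LipschitzWith K fun x ↦ f (projIcc lo hi h x) :=
  mul_one K ▸ hf.to_restrict.comp (LipschitzWith.projIcc h)

section Riccati

variable {a b₁ b₂ : ℝ → ℝ} {C : ℝ}

def riccatiField (a b₁ b₂ : ℝ → ℝ) (t x : ℝ) : ℝ := a t * (x - b₁ t) * (x - b₂ t)

theorem continuousOn_riccatiField (ha : ContinuousOn a (Ici 0)) (hb₁ : ContinuousOn b₁ (Ici 0))
    (hb₂ : ContinuousOn b₂ (Ici 0)) (x : ℝ) :
    ContinuousOn (riccatiField a b₁ b₂ · x) (Ici 0) := by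
  unfold riccatiField
  fun_prop

theorem abs_riccatiField_le {t x R : ℝ} (hC : |a t| ≤ C ∧ |b₁ t| ≤ C ∧ |b₂ t| ≤ C)
    (hx : |x| ≤ R) : |riccatiField a b₁ b₂ t x| ≤ C * (R + C) ^ 2 := by
  obtain ⟨ha, hb₁, hb₂⟩ := hC
  have h₁ : |x - b₁ t| ≤ R + C := (abs_sub _ _).trans (add_le_add hx hb₁)
  have h₂ : |x - b₂ t| ≤ R + C := (abs_sub _ _).trans (add_le_add hx hb₂)
  have hC₀ : 0 ≤ C := (abs_nonneg _).trans ha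
  have hRC : 0 ≤ R + C := (abs_nonneg _).trans h₁
  rw [riccatiField, abs_mul, abs_mul, sq, ← mul_assoc]
  exact mul_le_mul (mul_le_mul ha h₁ (abs_nonneg _) hC₀) h₂ (abs_nonneg _) (mul_nonneg hC₀ hRC)

theorem lipschitzOnWith_riccatiField {t : ℝ} (hC : |a t| ≤ C ∧ |b₁ t| ≤ C ∧ |b₂ t| ≤ C)
    (R : ℝ) :
    LipschitzOnWith (2 * C * (R + C)).toNNReal (riccatiField a b₁ b₂ t) (closedBall 0 R) := by
  obtain ⟨ha, hb₁, hb₂⟩ := hC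
  have hC₀ : 0 ≤ C := (abs_nonneg _).trans ha
  refine LipschitzOnWith.of_dist_le' fun x hx y hy ↦ ?_
  rw [mem_closedBall_zero_iff, Real.norm_eq_abs] at hx hy
  have hx₂ : |x - b₂ t| ≤ R + C := (abs_sub _ _).trans (add_le_add hx hb₂)
  have hy₁ : |y - b₁ t| ≤ R + C := (abs_sub _ _).trans (add_le_add hy hb₁)
  have hfactor : riccatiField a b₁ b₂ t x - riccatiField a b₁ b₂ t y
      = a t * ((x - b₂ t) + (y - b₁ t)) * (x - y) := by
    unfold riccatiField; ring
  rw [Real.dist_eq, Real.dist_eq, hfactor, abs_mul, abs_mul]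
  calc |a t| * |x - b₂ t + (y - b₁ t)| * |x - y|
      ≤ C * (|x - b₂ t| + |y - b₁ t|) * |x - y| := by gcongr; exact abs_add_le _ _
    _ ≤ C * ((R + C) + (R + C)) * |x - y| := by gcongr
    _ = 2 * C * (R + C) * |x - y| := by ring

theorem exists_riccati_solution_mem_Icc (ha : ContinuousOn a (Ici 0))
    (hb₁ : ContinuousOn b₁ (Ici 0)) (hb₂ : ContinuousOn b₂ (Ici 0))
    (hC : ∀ t ∈ Ici (0 : ℝ), |a t| ≤ C ∧ |b₁ t| ≤ C ∧ |b₂ t| ≤ C)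
    (ha₀ : ∀ t ∈ Ici (0 : ℝ), 0 ≤ a t) {lo hi A₀ : ℝ}
    (hlo : ∀ t ∈ Ici (0 : ℝ), lo ≤ b₁ t ∧ lo ≤ b₂ t)
    (hhi : ∀ t ∈ Ici (0 : ℝ), b₁ t ≤ hi ∧ hi ≤ b₂ t) (hA₀ : A₀ ∈ Icc lo hi) :
    ∃ A : ℝ → ℝ, A 0 = A₀ ∧ ∀ t ∈ Ici (0 : ℝ),
      HasDerivWithinAt A (riccatiField a b₁ b₂ t (A t)) (Ici 0) t ∧ A t ∈ Icc lo hi := by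
  have hle : lo ≤ hi := hA₀.1.trans hA₀.2
  set R := max |lo| |hi|
  have hR : Icc lo hi ⊆ closedBall 0 R := fun x hx ↦
    mem_closedBall_zero_iff.2 (abs_le_max_abs_abs hx.1 hx.2)
  obtain ⟨A, hA0, hA⟩ := exists_forall_mem_Ici_hasDerivWithinAt_of_lipschitzWith
    (v := fun t x ↦ riccatiField a b₁ b₂ t (projIcc lo hi hle x))
    (fun t ht ↦ ((lipschitzOnWith_riccatiField (hC t ht) R).mono hR).comp_projIcc hle)
    (fun x ↦ continuousOn_riccatiField ha hb₁ hb₂ _)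
    (fun t ht x ↦ (abs_riccatiField_le (hC t ht)
      (mem_closedBall_zero_iff.1 (hR (projIcc lo hi hle x).2))).trans (Real.le_coe_toNNReal _)) A₀
  have hmem : ∀ t ∈ Ici (0 : ℝ), A t ∈ Icc lo hi := fun t ht ↦
    mem_Icc_of_hasDerivWithinAt_projIcc hle hA (hA0 ▸ hA₀)
      (fun s hs ↦ mul_nonneg_of_nonpos_of_nonpos
        (mul_nonpos_of_nonneg_of_nonpos (ha₀ s hs) (sub_nonpos.2 (hlo s hs).1))
        (sub_nonpos.2 (hlo s hs).2))
      (fun s hs ↦ mul_nonpos_of_nonneg_of_nonpos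
        (mul_nonneg (ha₀ s hs) (sub_nonneg.2 (hhi s hs).1)) (sub_nonpos.2 (hhi s hs).2)) ht
  refine ⟨A, hA0, fun t ht ↦ ⟨?_, hmem t ht⟩⟩
  simpa [projIcc_of_mem hle (hmem t ht)] using hA t ht

end Riccati

theorem riccati_global_bounded_general
    (a b₁ b₂ : ℝ → ℝ)
    (hacont : ContinuousOn a (Ici 0)) (hb₁cont : ContinuousOn b₁ (Ici 0))
    (hb₂cont : ContinuousOn b₂ (Ici 0))
    (hbdd : ∃ C, ∀ t ∈ Ici (0 : ℝ), |a t| ≤ C ∧ |b₁ t| ≤ C ∧ |b₂ t| ≤ C)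
    (hapos : ∀ t ∈ Ici (0 : ℝ), 0 < a t)
    (bbar : ℝ) (hbar : ∀ t ∈ Ici (0 : ℝ), b₁ t ≤ bbar ∧ bbar ≤ b₂ t)
    (A₀ : ℝ) (hA₀ : A₀ ≤ bbar) :
    (∃ A : ℝ → ℝ, A 0 = A₀ ∧
      (∀ t ∈ Ici (0 : ℝ), HasDerivWithinAt A (a t * (A t - b₁ t) * (A t - b₂ t)) (Ici 0) t) ∧
      (∀ t ∈ Ici (0 : ℝ), min A₀ (⨅ s : Ici (0 : ℝ), b₁ s) ≤ A t ∧ A t ≤ bbar)) ∧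
    (∀ A B : ℝ → ℝ, A 0 = A₀ → B 0 = A₀ →
      (∀ t ∈ Ici (0 : ℝ), HasDerivWithinAt A (a t * (A t - b₁ t) * (A t - b₂ t)) (Ici 0) t) →
      (∀ t ∈ Ici (0 : ℝ), HasDerivWithinAt B (a t * (B t - b₁ t) * (B t - b₂ t)) (Ici 0) t) →
      ∀ t ∈ Ici (0 : ℝ), A t = B t) := by
  obtain ⟨C, hC⟩ := hbdd
  have hb₁_bdd : BddBelow (range fun s : Ici (0 : ℝ) ↦ b₁ s) :=
    ⟨-C, by rintro _ ⟨s, rfl⟩; exact neg_le_of_abs_le (hC s s.2).2.1⟩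
  set m := min A₀ (⨅ s : Ici (0 : ℝ), b₁ s)
  have hm : ∀ t ∈ Ici (0 : ℝ), m ≤ b₁ t := fun t ht ↦
    (min_le_right _ _).trans (ciInf_le hb₁_bdd ⟨t, ht⟩)
  refine ⟨?_, fun A B hA0 hB0 hA hB ↦ ?_⟩
  · obtain ⟨A, hA0, hA⟩ := exists_riccati_solution_mem_Icc hacont hb₁cont hb₂cont hC
      (fun t ht ↦ (hapos t ht).le)
      (fun t ht ↦ ⟨hm t ht, (hm t ht).trans ((hbar t ht).1.trans (hbar t ht).2)⟩) hbar
      ⟨min_le_left _ _, hA₀⟩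
    exact ⟨A, hA0, fun t ht ↦ (hA t ht).1, fun t ht ↦ (hA t ht).2⟩
  · exact ODE_solution_unique_Ici_of_locallyLipschitz
      (fun R ↦ ⟨_, fun t ht ↦ lipschitzOnWith_riccatiField (hC t ht) R⟩) hA hB
      (hA0.trans hB0.symm)

/-- Under the stated assumptions, if `b₁(t) ≤ bbar ≤ b₂(t)` for all `t ≥ 0`
and `A₀ ≤ bbar`, then the Riccati equation `dA/dt = a(t)(A − b₁(t))(A − b₂(t))`, `A(0)=A₀`,
has a unique global solution on `[0,∞)`, bounded by `min{A₀, inf b₁} ≤ A(t) ≤ bbar`. -/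
theorem riccati_global_bounded
    (a b₁ b₂ : ℝ → ℝ)
    (hacont : ContinuousOn a (Ici 0)) (hb₁cont : ContinuousOn b₁ (Ici 0))
    (hb₂cont : ContinuousOn b₂ (Ici 0))
    (hbdd : ∃ C, ∀ t ∈ Ici (0 : ℝ), |a t| ≤ C ∧ |b₁ t| ≤ C ∧ |b₂ t| ≤ C)
    (hapos : ∀ t ∈ Ici (0 : ℝ), 0 < a t)
    (hb₁b₂ : ∀ t ∈ Ici (0 : ℝ), b₁ t ≤ b₂ t)
    (bbar : ℝ) (hbar : ∀ t ∈ Ici (0 : ℝ), b₁ t ≤ bbar ∧ bbar ≤ b₂ t)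
    (A₀ : ℝ) (hA₀ : A₀ ≤ bbar) :
    (∃ A : ℝ → ℝ, A 0 = A₀ ∧
      (∀ t ∈ Ici (0 : ℝ), HasDerivWithinAt A (a t * (A t - b₁ t) * (A t - b₂ t)) (Ici 0) t) ∧
      (∀ t ∈ Ici (0 : ℝ), min A₀ (⨅ s : Ici (0 : ℝ), b₁ s) ≤ A t ∧ A t ≤ bbar)) ∧
    (∀ A B : ℝ → ℝ, A 0 = A₀ → B 0 = A₀ →
      (∀ t ∈ Ici (0 : ℝ), HasDerivWithinAt A (a t * (A t - b₁ t) * (A t - b₂ t)) (Ici 0) t) →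
      (∀ t ∈ Ici (0 : ℝ), HasDerivWithinAt B (a t * (B t - b₁ t) * (B t - b₂ t)) (Ici 0) t) →
      ∀ t ∈ Ici (0 : ℝ), A t = B t) :=
  riccati_global_bounded_general a b₁ b₂ hacont hb₁cont hb₂cont hbdd hapos bbar hbar A₀ hA₀
end

section
/- Let a, b₁, b₂ : [0,∞) → ℝ be continuous and uniformly bounded with b₁(t) ≤ b₂(t) for all t, and suppose a(t) ≥ a₀ for some constant a₀ > 0. If B₀ > sup_{t≥0} b₂(t), then there is no locally absolutely continuous function B : [0,∞) → ℝ with B(0) = B₀ satisfying the differential inequality dB/dt ≥ a(t) (B − b₁(t)) (B − b₂(t)) for almost every t ≥ 0; that is, any such B must blow up (cease to exist) in finite time. -/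
open Set MeasureTheory

/-!
With `M = sup b₂`, every solution satisfies `B' ≥ a₀ (B - M)²` as long as `B ≥ M`. By continuity
`B` cannot drop below `B 0 > M`, so it is nondecreasing, and then the gap `B - M` doubles within
the times `2⁻ⁿ / (a₀ (B 0 - M))`, whose sum is finite: `B` would be unbounded on a bounded
interval.
-/

theorem ContinuousOn.exists_first_le {α β : Type*} [ConditionallyCompleteLinearOrder α]
    [TopologicalSpace α] [OrderTopology α] [LinearOrder β] [TopologicalSpace β]
    [OrderClosedTopology β] {f : α → β} {a b : α} {c : β} (hf : ContinuousOn f (Icc a b))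
    (hab : a ≤ b) (hb : f b ≤ c) : ∃ t ∈ Icc a b, f t ≤ c ∧ ∀ u ∈ Ico a t, c < f u := by
  set S := Icc a b ∩ f ⁻¹' Iic c
  have hS : IsClosed S := hf.preimage_isClosed_of_isClosed isClosed_Icc isClosed_Iic
  have hne : S.Nonempty := ⟨b, ⟨hab, le_rfl⟩, hb⟩
  have hbdd : BddBelow S := ⟨a, fun u hu => hu.1.1⟩
  obtain ⟨hmem, hle⟩ := hS.csInf_mem hne hbdd
  refine ⟨sInf S, hmem, hle, fun u hu => ?_⟩
  by_contra! hfu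
  exact (csInf_le hbdd ⟨⟨hu.1, hu.2.le.trans hmem.2⟩, hfu⟩).not_gt hu.2

theorem mul_sq_sub_le_mul_sub_mul_sub {a₀ a b₁ b₂ M x : ℝ} (ha₀ : 0 ≤ a₀) (ha : a₀ ≤ a)
    (hb : b₁ ≤ b₂) (hb₂ : b₂ ≤ M) (hx : M ≤ x) :
    a₀ * (x - M) ^ 2 ≤ a * (x - b₁) * (x - b₂) :=
  calc a₀ * (x - M) ^ 2 = a₀ * (x - M) * (x - M) := by ring
    _ ≤ a * (x - b₁) * (x - b₂) := by
      have : 0 ≤ a * (x - b₁) := mul_nonneg (by linarith) (by linarith)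
      gcongr <;> linarith

/-- An integrated supersolution of `B' = k (B - M)²` on `[0, ∞)`, above the level `M`. -/
structure IsRiccatiSupersolution (k M : ℝ) (B φ : ℝ → ℝ) : Prop where
  intervalIntegrable : ∀ t, 0 ≤ t → IntervalIntegrable φ volume 0 t
  eq_add_integral : ∀ t, 0 ≤ t → B t = B 0 + ∫ s in (0 : ℝ)..t, φ s
  mul_sq_le : ∀ᵐ t, 0 ≤ t → M ≤ B t → k * (B t - M) ^ 2 ≤ φ t

namespace IsRiccatiSupersolution

variable {k M : ℝ} {B φ : ℝ → ℝ}

theorem intervalIntegrable_of_le (h : IsRiccatiSupersolution k M B φ) {s t : ℝ} (hs : 0 ≤ s)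
    (hst : s ≤ t) : IntervalIntegrable φ volume s t :=
  (h.intervalIntegrable t (hs.trans hst)).mono_set <| by
    rw [uIcc_of_le hst, uIcc_of_le (hs.trans hst)]
    exact Icc_subset_Icc_left hs

theorem sub_eq_integral (h : IsRiccatiSupersolution k M B φ) {s t : ℝ} (hs : 0 ≤ s)
    (hst : s ≤ t) : B t - B s = ∫ u in s..t, φ u := by
  rw [h.eq_add_integral t (hs.trans hst), h.eq_add_integral s hs, add_sub_add_left_eq_sub,
    intervalIntegral.integral_interval_sub_left (h.intervalIntegrable t (hs.trans hst))
      (h.intervalIntegrable s hs)]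

theorem continuousOn_Icc (h : IsRiccatiSupersolution k M B φ) {T : ℝ} (hT : 0 ≤ T) :
    ContinuousOn B (Icc 0 T) := by
  have hprim := intervalIntegral.continuousOn_primitive_interval' (h.intervalIntegrable T hT)
    left_mem_uIcc
  rw [uIcc_of_le hT] at hprim
  exact (continuousOn_const.add hprim).congr fun t ht => h.eq_add_integral t ht.1

theorem mul_sq_mul_le_sub (h : IsRiccatiSupersolution k M B φ) (hk : 0 ≤ k) {s t m : ℝ}
    (hs : 0 ≤ s) (hst : s ≤ t) (hm : M ≤ m) (hB : ∀ u ∈ Ioo s t, m ≤ B u) :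
    k * (m - M) ^ 2 * (t - s) ≤ B t - B s := by
  have hIoo : ∀ᵐ u ∂volume.restrict (Icc s t), u ∈ Ioo s t := by
    rw [← Measure.restrict_congr_set Ioo_ae_eq_Icc]
    exact ae_restrict_mem measurableSet_Ioo
  calc k * (m - M) ^ 2 * (t - s) = ∫ _ in s..t, k * (m - M) ^ 2 := by
        simp only [intervalIntegral.integral_const, smul_eq_mul, mul_comm]
    _ ≤ ∫ u in s..t, φ u := by
        refine intervalIntegral.integral_mono_ae_restrict hst intervalIntegrable_const
          (h.intervalIntegrable_of_le hs hst) ?_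
        filter_upwards [ae_restrict_of_ae h.mul_sq_le, hIoo] with u hφ hu
        have hmu := hB u hu
        calc k * (m - M) ^ 2 ≤ k * (B u - M) ^ 2 := by gcongr
          _ ≤ φ u := hφ (hs.trans hu.1.le) (hm.trans hmu)
    _ = B t - B s := (h.sub_eq_integral hs hst).symm

theorem apply_zero_le_apply (h : IsRiccatiSupersolution k M B φ) (hk : 0 ≤ k) (hM : M < B 0)
    {t : ℝ} (ht : 0 ≤ t) : B 0 ≤ B t := by
  by_contra! hlt
  -- `B` must first come down to a level `c ∈ [M, B 0)`, yet it cannot decrease while above `M`.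
  set c := max (B t) ((M + B 0) / 2)
  have hc : c < B 0 := max_lt hlt (by linarith)
  have hMc : M ≤ c := le_max_of_le_right (by linarith)
  obtain ⟨t₁, ht₁, hBt₁, habove⟩ :=
    (h.continuousOn_Icc ht).exists_first_le ht (le_max_left _ _)
  have hgrowth := h.mul_sq_mul_le_sub hk le_rfl ht₁.1 hMc
    fun u hu => (habove u (Ioo_subset_Ico_self hu)).le
  have : 0 ≤ k * (c - M) ^ 2 * (t₁ - 0) := mul_nonneg (by positivity) (sub_nonneg.2 ht₁.1)
  linarith

theorem monotoneOn (h : IsRiccatiSupersolution k M B φ) (hk : 0 ≤ k) (hM : M < B 0) :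
    MonotoneOn B (Ici 0) := fun s hs t _ hst => by
  have hgrowth := h.mul_sq_mul_le_sub hk hs hst hM.le
    fun u hu => h.apply_zero_le_apply hk hM (hs.trans hu.1.le)
  have : 0 ≤ k * (B 0 - M) ^ 2 * (t - s) := mul_nonneg (by positivity) (sub_nonneg.2 hst)
  linarith

theorem add_two_pow_mul_le (h : IsRiccatiSupersolution k M B φ) (hk : 0 < k) (hM : M < B 0)
    (n : ℕ) :
    M + 2 ^ n * (B 0 - M) ≤ B (∑ i ∈ Finset.range n, (1 / 2) ^ i / (k * (B 0 - M))) := by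
  set ε := B 0 - M
  have hε : 0 < ε := sub_pos.2 hM
  induction n with
  | zero => simp [ε]
  | succ n ih =>
    set τ := ∑ i ∈ Finset.range n, (1 / 2 : ℝ) ^ i / (k * ε)
    have hτ : 0 ≤ τ := by positivity
    rw [Finset.sum_range_succ]
    have hgrowth := h.mul_sq_mul_le_sub hk.le (t := τ + (1 / 2) ^ n / (k * ε)) hτ
      (le_add_of_nonneg_right (by positivity)) (le_add_of_nonneg_right (by positivity))
      fun u hu => ih.trans (h.monotoneOn hk.le hM hτ (hτ.trans hu.1.le) hu.1.le)
    have hgap : k * (M + 2 ^ n * ε - M) ^ 2 * (τ + (1 / 2) ^ n / (k * ε) - τ) = 2 ^ n * ε := by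
      rw [one_div_pow]
      field_simp
      ring
    rw [hgap] at hgrowth
    rw [pow_succ]
    linarith

theorem apply_zero_le (h : IsRiccatiSupersolution k M B φ) (hk : 0 < k) : B 0 ≤ M := by
  by_contra! hM
  set ε := B 0 - M
  have hε : 0 < ε := sub_pos.2 hM
  set T := 2 / (k * ε)
  have hbound : ∀ n : ℕ, M + 2 ^ n * ε ≤ B T := fun n => by
    refine (h.add_two_pow_mul_le hk hM n).trans <|
      h.monotoneOn hk.le hM (mem_Ici.2 (by positivity)) (mem_Ici.2 (by positivity)) ?_
    rw [← Finset.sum_div, div_le_div_iff_of_pos_right (by positivity)]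
    exact sum_geometric_two_le n
  obtain ⟨n, hn⟩ := pow_unbounded_of_one_lt ((B T - M) / ε) one_lt_two
  rw [div_lt_iff₀ hε] at hn
  linarith [hbound n]

end IsRiccatiSupersolution

theorem riccati_inequality_blowup_general
    (a b₁ b₂ : ℝ → ℝ) (a₀ : ℝ) (ha₀ : 0 < a₀)
    (hbdd : ∃ C, ∀ t ∈ Ici (0 : ℝ), |a t| ≤ C ∧ |b₁ t| ≤ C ∧ |b₂ t| ≤ C)
    (hb₁b₂ : ∀ t ∈ Ici (0 : ℝ), b₁ t ≤ b₂ t)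
    (haa₀ : ∀ t ∈ Ici (0 : ℝ), a₀ ≤ a t)
    (B₀ : ℝ) (hB₀ : B₀ > ⨆ t : Ici (0 : ℝ), b₂ t) :
    ¬ ∃ B φ : ℝ → ℝ, B 0 = B₀ ∧
      (∀ t ∈ Ici (0 : ℝ), IntervalIntegrable φ volume 0 t) ∧
      (∀ t ∈ Ici (0 : ℝ), B t = B₀ + ∫ s in (0 : ℝ)..t, φ s) ∧
      (∀ᵐ t, t ∈ Ici (0 : ℝ) → a t * (B t - b₁ t) * (B t - b₂ t) ≤ φ t) := by
  obtain ⟨C, hC⟩ := hbdd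
  set M := ⨆ t : Ici (0 : ℝ), b₂ t
  have hb₂M : ∀ t ∈ Ici (0 : ℝ), b₂ t ≤ M := fun t ht =>
    le_ciSup (f := fun t : Ici (0 : ℝ) => b₂ t)
      ⟨C, by rintro _ ⟨s, rfl⟩; exact (abs_le.mp (hC s s.2).2.2).2⟩ ⟨t, ht⟩
  rintro ⟨B, φ, hB0, hφ, hB, hineq⟩
  have h : IsRiccatiSupersolution a₀ M B φ :=
    { intervalIntegrable := hφ
      eq_add_integral := fun t ht => hB0 ▸ hB t ht
      mul_sq_le := by
        filter_upwards [hineq] with t ht ht0 hMB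
        exact (mul_sq_sub_le_mul_sub_mul_sub ha₀.le (haa₀ t ht0) (hb₁b₂ t ht0) (hb₂M t ht0)
          hMB).trans (ht ht0) }
  exact (h.apply_zero_le ha₀).not_gt (hB0 ▸ hB₀)

/-- Let `a, b₁, b₂ : [0,∞) → ℝ` be continuous and uniformly bounded with
`b₁ ≤ b₂` and `a(t) ≥ a₀ > 0`. If `B₀ > sup_{t≥0} b₂(t)`, then there is no locally
absolutely continuous `B : [0,∞) → ℝ` with `B(0) = B₀` satisfying
`dB/dt ≥ a(t)(B − b₁(t))(B − b₂(t))` a.e.; any such `B` must blow up in finite time.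
(Local absolute continuity is encoded by the fundamental theorem of calculus
representation `B t = B₀ + ∫₀ᵗ φ` with `φ` locally integrable, `φ` being the a.e.
derivative of `B`.) -/
theorem riccati_inequality_blowup
    (a b₁ b₂ : ℝ → ℝ) (a₀ : ℝ) (ha₀ : 0 < a₀)
    (hacont : ContinuousOn a (Ici 0)) (hb₁cont : ContinuousOn b₁ (Ici 0))
    (hb₂cont : ContinuousOn b₂ (Ici 0))
    (hbdd : ∃ C, ∀ t ∈ Ici (0 : ℝ), |a t| ≤ C ∧ |b₁ t| ≤ C ∧ |b₂ t| ≤ C)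
    (hb₁b₂ : ∀ t ∈ Ici (0 : ℝ), b₁ t ≤ b₂ t)
    (haa₀ : ∀ t ∈ Ici (0 : ℝ), a₀ ≤ a t)
    (B₀ : ℝ) (hB₀ : B₀ > ⨆ t : Ici (0 : ℝ), b₂ t) :
    ¬ ∃ B φ : ℝ → ℝ, B 0 = B₀ ∧
      (∀ t ∈ Ici (0 : ℝ), IntervalIntegrable φ volume 0 t) ∧
      (∀ t ∈ Ici (0 : ℝ), B t = B₀ + ∫ s in (0 : ℝ)..t, φ s) ∧
      (∀ᵐ t, t ∈ Ici (0 : ℝ) → a t * (B t - b₁ t) * (B t - b₂ t) ≤ φ t) :=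
  riccati_inequality_blowup_general a b₁ b₂ a₀ ha₀ hbdd hb₁b₂ haa₀ B₀ hB₀
end

section
/- Let T > 0 and let a, b₁, b₂ : [0,T] → ℝ be continuous and uniformly bounded with a(t) > 0 and b₁(t) ≤ b₂(t) for all t. If B : [0,T] → ℝ is locally absolutely continuous with B(0) = B₀ and satisfies dB/dt ≥ a(t) (B − b₁(t)) (B − b₂(t)) for almost every t ∈ [0,T], then B(t) ≥ min{ B₀, inf_{t∈[0,T]} b₁(t) } for all t ∈ [0,T]. -/
/-!
Put `m = min B₀ (inf b₁)`. Wherever `B < m` we have `B < b₁ ≤ b₂`, so the Riccati right-hand side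
`a (B - b₁) (B - b₂)` is positive and hence so is `dB/dt`. Starting from the last time `s ≤ t` at
which `B s ≥ m`, the function `B` is therefore nondecreasing on `[s, t]`, giving `B t ≥ B s ≥ m`.
-/

open Set MeasureTheory

theorem ContinuousOn.exists_ge_forall_Ioc_lt
    {α β : Type*} [LinearOrder α] [TopologicalSpace α] [OrderClosedTopology α] [CompactIccSpace α]
    [LinearOrder β] [TopologicalSpace β] [ClosedIciTopology β]
    {f : α → β} {a b : α} {m : β} (hf : ContinuousOn f (Icc a b)) (hab : a ≤ b)
    (ha : m ≤ f a) : ∃ s ∈ Icc a b, m ≤ f s ∧ ∀ t ∈ Ioc s b, f t < m := by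
  have hcompact : IsCompact (Icc a b ∩ f ⁻¹' Ici m) :=
    isCompact_Icc.of_isClosed_subset (hf.preimage_isClosed_of_isClosed isClosed_Icc isClosed_Ici)
      inter_subset_left
  obtain ⟨s, ⟨hs, hfs⟩, hgreatest⟩ := hcompact.exists_isGreatest ⟨a, ⟨left_mem_Icc.2 hab, ha⟩⟩
  refine ⟨s, hs, hfs, fun t ht => not_le.1 fun hft => ?_⟩
  exact ht.1.not_ge (hgreatest ⟨⟨hs.1.trans ht.1.le, ht.2⟩, hft⟩)

theorem le_of_eq_add_integral_of_nonneg_where_lt {B φ : ℝ → ℝ} {a b m : ℝ} (hab : a ≤ b)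
    (hφ : IntervalIntegrable φ volume a b) (hB : ∀ t ∈ Icc a b, B t = B a + ∫ s in a..t, φ s)
    (hm : m ≤ B a) (hφ_nonneg : ∀ᵐ t, t ∈ Icc a b → B t < m → 0 ≤ φ t) : m ≤ B b := by
  have hBcont : ContinuousOn B (Icc a b) := by
    have hprim := intervalIntegral.continuousOn_primitive_interval' hφ left_mem_uIcc
    rw [uIcc_of_le hab] at hprim
    exact (continuousOn_const.add hprim).congr hB
  obtain ⟨s, hs, hBs, hlt⟩ := hBcont.exists_ge_forall_Ioc_lt hab hm
  have hφs : IntervalIntegrable φ volume a s := hφ.mono_set (by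
    rw [uIcc_of_le hab, uIcc_of_le hs.1]; exact Icc_subset_Icc_right hs.2)
  have hincrement : B b - B s = ∫ u in s..b, φ u := by
    rw [hB b (right_mem_Icc.2 hab), hB s hs, add_sub_add_left_eq_sub,
      intervalIntegral.integral_interval_sub_left hφ hφs]
  have hnonneg : 0 ≤ ∫ u in s..b, φ u := by
    rw [intervalIntegral.integral_of_le hs.2]
    refine setIntegral_nonneg_of_ae_restrict ?_
    filter_upwards [ae_restrict_of_ae hφ_nonneg, ae_restrict_mem measurableSet_Ioc] with t hφt ht
    exact hφt ⟨hs.1.trans ht.1.le, ht.2⟩ (hlt t ht)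
  linarith

theorem riccati_inequality_lower_bound_general
    (T : ℝ) (a b₁ b₂ : ℝ → ℝ)
    (hbdd : ∃ C, ∀ t ∈ Icc (0 : ℝ) T, |a t| ≤ C ∧ |b₁ t| ≤ C ∧ |b₂ t| ≤ C)
    (hapos : ∀ t ∈ Icc (0 : ℝ) T, 0 < a t)
    (hb₁b₂ : ∀ t ∈ Icc (0 : ℝ) T, b₁ t ≤ b₂ t)
    (B₀ : ℝ) (B φ : ℝ → ℝ) (hB0 : B 0 = B₀)
    (hint : ∀ t ∈ Icc (0 : ℝ) T, IntervalIntegrable φ volume 0 t)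
    (hftc : ∀ t ∈ Icc (0 : ℝ) T, B t = B₀ + ∫ s in (0 : ℝ)..t, φ s)
    (hineq : ∀ᵐ t, t ∈ Icc (0 : ℝ) T → a t * (B t - b₁ t) * (B t - b₂ t) ≤ φ t) :
    ∀ t ∈ Icc (0 : ℝ) T, min B₀ (⨅ s : Icc (0 : ℝ) T, b₁ s) ≤ B t := by
  obtain ⟨C, hC⟩ := hbdd
  have hb₁_bdd : BddBelow (range fun s : Icc (0 : ℝ) T => b₁ s) :=
    ⟨-C, by rintro _ ⟨s, rfl⟩; exact (abs_le.1 (hC s s.2).2.1).1⟩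
  have hb₁_ge (s : ℝ) (hs : s ∈ Icc (0 : ℝ) T) : min B₀ (⨅ s : Icc (0 : ℝ) T, b₁ s) ≤ b₁ s :=
    (min_le_right _ _).trans (ciInf_le hb₁_bdd ⟨s, hs⟩)
  intro t ht
  have hsub : Icc 0 t ⊆ Icc 0 T := Icc_subset_Icc_right ht.2
  refine le_of_eq_add_integral_of_nonneg_where_lt ht.1 (hint t ht)
    (fun s hs => hB0 ▸ hftc s (hsub hs)) (hB0 ▸ min_le_left _ _) ?_
  filter_upwards [hineq] with s hφs hs hBs
  have hsT := hsub hs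
  have hrhs : 0 < a s * (B s - b₁ s) * (B s - b₂ s) := by
    have hBb₁ : B s < b₁ s := hBs.trans_le (hb₁_ge s hsT)
    exact mul_pos_of_neg_of_neg (mul_neg_of_pos_of_neg (hapos s hsT) (sub_neg.2 hBb₁))
      (sub_neg.2 (hBb₁.trans_le (hb₁b₂ s hsT)))
  exact hrhs.le.trans (hφs hsT)

/-- Let `T > 0` and `a, b₁, b₂ : [0,T] → ℝ` be continuous and bounded with
`a(t) > 0` and `b₁(t) ≤ b₂(t)`. If `B : [0,T] → ℝ` is locally absolutely continuous with
`B(0) = B₀` and satisfies `dB/dt ≥ a(t)(B − b₁(t))(B − b₂(t))` a.e. on `[0,T]`,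
then `B(t) ≥ min{B₀, inf_{[0,T]} b₁}` on `[0,T]`.
(Local absolute continuity is encoded via the FTC representation `B t = B₀ + ∫₀ᵗ φ`
with `φ` locally integrable, `φ` being the a.e. derivative of `B`.) -/
theorem riccati_inequality_lower_bound
    (T : ℝ) (hT : 0 < T) (a b₁ b₂ : ℝ → ℝ)
    (hacont : ContinuousOn a (Icc 0 T)) (hb₁cont : ContinuousOn b₁ (Icc 0 T))
    (hb₂cont : ContinuousOn b₂ (Icc 0 T))
    (hbdd : ∃ C, ∀ t ∈ Icc (0 : ℝ) T, |a t| ≤ C ∧ |b₁ t| ≤ C ∧ |b₂ t| ≤ C)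
    (hapos : ∀ t ∈ Icc (0 : ℝ) T, 0 < a t)
    (hb₁b₂ : ∀ t ∈ Icc (0 : ℝ) T, b₁ t ≤ b₂ t)
    (B₀ : ℝ) (B φ : ℝ → ℝ) (hB0 : B 0 = B₀)
    (hint : ∀ t ∈ Icc (0 : ℝ) T, IntervalIntegrable φ volume 0 t)
    (hftc : ∀ t ∈ Icc (0 : ℝ) T, B t = B₀ + ∫ s in (0 : ℝ)..t, φ s)
    (hineq : ∀ᵐ t, t ∈ Icc (0 : ℝ) T → a t * (B t - b₁ t) * (B t - b₂ t) ≤ φ t) :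
    ∀ t ∈ Icc (0 : ℝ) T, min B₀ (⨅ s : Icc (0 : ℝ) T, b₁ s) ≤ B t :=
  riccati_inequality_lower_bound_general T a b₁ b₂ hbdd hapos hb₁b₂ B₀ B φ hB0 hint hftc hineq
end

section
/- For all real numbers u ∈ [0,1], v ∈ [−1,1], and every N₀ ≤ 0, one has ( −( 2(1−2u)v − u(1−u) ) + √( ( 2(1−2u)v − u(1−u) )² + 8 u(1−u)( v² − N₀ ) ) ) / 4 ≤ 1/2 + (√2/4)·√(3 − N₀). In particular, max over (u,v) ∈ [0,1]×[−1,1] of ( −2(1−2u)v + u(1−u) ) equals 2, and 8u(1−u)(v² − N₀) ≤ 2(1 − N₀) on this region. -/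
/-!
Writing `A` for the linear coefficient and `B = 8u(1-u)(v² - N₀) ≥ 0` for the discriminant
excess, `4 M₂ = -A + √(A² + B)`. The map `x ↦ x + √(x² + B)` is monotone, and `-A ≤ 2` on the
region, so `4 M₂ ≤ 2 + √(4 + B)`; finally `u(1-u) ≤ 1/4` and `v² ≤ 1` give `B ≤ 2(1 - N₀)`,
whence `4 + B ≤ 2(3 - N₀)`.
-/

open Real Set

namespace TrafficFlow

theorem monotone_add_sqrt_sq_add {b : ℝ} (hb : 0 ≤ b) : Monotone fun x : ℝ => x + √(x ^ 2 + b) := by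
  intro x y hxy
  have hy : |y| ≤ √(y ^ 2 + b) := by
    rw [← sqrt_sq_eq_abs]
    exact sqrt_le_sqrt (by linarith)
  have h_sqrt_le : √(x ^ 2 + b) ≤ √(y ^ 2 + b) + (y - x) := by
    rw [sqrt_le_left (by linarith [abs_nonneg y])]
    nlinarith [neg_abs_le y, sq_sqrt (show 0 ≤ y ^ 2 + b by positivity)]
  dsimp only
  linarith

/-- The coefficient of `M` in the quadratic `2M² + (2(1-2u)v - u(1-u))M - u(1-u)v² + u(1-u)N₀`. -/
def linCoeff (u v : ℝ) : ℝ := 2 * (1 - 2 * u) * v - u * (1 - u)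

/-- Minus eight times the constant term of that quadratic, so its discriminant is
`linCoeff u v ^ 2 + discrExcess u v N₀`. -/
def discrExcess (u v N₀ : ℝ) : ℝ := 8 * u * (1 - u) * (v ^ 2 - N₀)

variable {u v N₀ : ℝ}

theorem neg_two_le_linCoeff (hu : u ∈ Icc (0 : ℝ) 1) (hv : v ∈ Icc (-1 : ℝ) 1) :
    -2 ≤ linCoeff u v := by
  obtain ⟨hu0, hu1⟩ := hu
  obtain ⟨hv0, hv1⟩ := hv
  unfold linCoeff
  nlinarith [mul_nonneg (mul_nonneg hu0 (sub_nonneg.2 hu1)) (sub_nonneg.2 hv1),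
    mul_nonneg (mul_nonneg hu0 (sub_nonneg.2 hu1)) (neg_le_iff_add_nonneg.1 hv0),
    mul_nonneg (neg_le_iff_add_nonneg.1 hv0) (sq_nonneg (1 - 2 * u)),
    mul_nonneg (sub_nonneg.2 hv1) (sq_nonneg (1 - 2 * u))]

theorem mul_one_sub_le_quarter (u : ℝ) : u * (1 - u) ≤ 1 / 4 := by
  nlinarith [sq_nonneg (2 * u - 1)]

theorem discrExcess_nonneg (hu : u ∈ Icc (0 : ℝ) 1) (hN : N₀ ≤ 0) : 0 ≤ discrExcess u v N₀ := by
  have hvN : 0 ≤ v ^ 2 - N₀ := by linarith [sq_nonneg v]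
  exact mul_nonneg (mul_nonneg (mul_nonneg (by norm_num) hu.1) (sub_nonneg.2 hu.2)) hvN

theorem discrExcess_le (u : ℝ) (hv : v ∈ Icc (-1 : ℝ) 1) (hN : N₀ ≤ 0) :
    discrExcess u v N₀ ≤ 2 * (1 - N₀) := by
  have hv2 : v ^ 2 ≤ 1 := sq_le_one_iff_abs_le_one v |>.2 (abs_le.2 hv)
  calc discrExcess u v N₀ = 8 * (u * (1 - u)) * (v ^ 2 - N₀) := by unfold discrExcess; ring
    _ ≤ 8 * (1 / 4) * (1 - N₀) := by
      gcongr
      · linarith [sq_nonneg v]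
      · exact mul_one_sub_le_quarter u
    _ = 2 * (1 - N₀) := by ring

theorem larger_root_le (hu : u ∈ Icc (0 : ℝ) 1) (hv : v ∈ Icc (-1 : ℝ) 1) (hN : N₀ ≤ 0) :
    (-linCoeff u v + √(linCoeff u v ^ 2 + discrExcess u v N₀)) / 4
      ≤ 1 / 2 + (√2 / 4) * √(3 - N₀) := by
  have h_mono := monotone_add_sqrt_sq_add (discrExcess_nonneg (v := v) hu hN)
  calc (-linCoeff u v + √(linCoeff u v ^ 2 + discrExcess u v N₀)) / 4
      = (-linCoeff u v + √((-linCoeff u v) ^ 2 + discrExcess u v N₀)) / 4 := by rw [neg_sq]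
    _ ≤ (2 + √(2 ^ 2 + discrExcess u v N₀)) / 4 := by
      gcongr ?_ / 4
      exact @h_mono (-linCoeff u v) 2 (by linarith [neg_two_le_linCoeff hu hv])
    _ ≤ (2 + √(2 ^ 2 + 2 * (1 - N₀))) / 4 := by
      gcongr
      exact discrExcess_le u hv hN
    _ = 1 / 2 + (√2 / 4) * √(3 - N₀) := by
      rw [show (2 : ℝ) ^ 2 + 2 * (1 - N₀) = 2 * (3 - N₀) by ring, sqrt_mul zero_le_two]
      ring

end TrafficFlow

open TrafficFlow in
/-- For all `u ∈ [0,1]`, `v ∈ [−1,1]` and `N₀ ≤ 0`, the larger root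
`M₂` of the quadratic arising in the gradient dynamics of the traffic flow model with
constant interaction potential is bounded above by `1/2 + (√2/4)√(3 − N₀)`.
In particular, the maximum of `−2(1−2u)v + u(1−u)` over `[0,1]×[−1,1]` equals `2`,
and `8u(1−u)(v² − N₀) ≤ 2(1 − N₀)` on this region. -/
theorem upper_bound_M2_constant_potential :
    (∀ u v N₀ : ℝ, u ∈ Set.Icc (0 : ℝ) 1 → v ∈ Set.Icc (-1 : ℝ) 1 → N₀ ≤ 0 →
      (-(2*(1 - 2*u)*v - u*(1 - u))
        + Real.sqrt ((2*(1 - 2*u)*v - u*(1 - u))^2 + 8*u*(1 - u)*(v^2 - N₀))) / 4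
      ≤ 1/2 + (Real.sqrt 2 / 4) * Real.sqrt (3 - N₀)) ∧
    IsGreatest ((fun p : ℝ × ℝ => -2*(1 - 2*p.1)*p.2 + p.1*(1 - p.1)) ''
      (Set.Icc (0 : ℝ) 1 ×ˢ Set.Icc (-1 : ℝ) 1)) 2 ∧
    (∀ u v N₀ : ℝ, u ∈ Set.Icc (0 : ℝ) 1 → v ∈ Set.Icc (-1 : ℝ) 1 → N₀ ≤ 0 →
      8*u*(1 - u)*(v^2 - N₀) ≤ 2*(1 - N₀)) := by
  refine ⟨fun u v N₀ hu hv hN => larger_root_le hu hv hN, ⟨?_, ?_⟩,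
    fun u v N₀ _ hv hN => discrExcess_le u hv hN⟩
  · exact ⟨(0, -1), ⟨⟨le_rfl, zero_le_one⟩, ⟨le_rfl, by norm_num⟩⟩, by norm_num⟩
  · rintro _ ⟨⟨u, v⟩, ⟨hu, hv⟩, rfl⟩
    have := neg_two_le_linCoeff hu hv
    unfold linCoeff at this
    dsimp only
    linarith
end

section
/- For all real numbers u ∈ [0,1], v ∈ [−2,2], and every N₀ ≤ 0, one has ( −( 2(1−2u)v − 2u(1−u) ) + √( ( 2(1−2u)v − 2u(1−u) )² + 8 u(1−u)( v² − 2N₀ ) ) ) / 4 ≤ 1 + (1/2)·√(6 − N₀). In particular, max over (u,v) ∈ [0,1]×[−2,2] of ( −2(1−2u)v + 2u(1−u) ) equals 4, and 8u(1−u)(v² − 2N₀) ≤ 2(4 − 2N₀) on this region. -/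
/-! With `A = 2(1-2u)v - 2u(1-u)` and `B = 8u(1-u)(v² - 2N₀)` the root is `(-A + √(A² + B))/4`.
On the region `|A| ≤ 4` and `B ≤ 2(4 - 2N₀)`, so `-A ≤ 4` and `√(A² + B) ≤ √(24 - 4N₀) = 2√(6 - N₀)`. -/

lemma mul_one_sub_self_le_quarter (u : ℝ) : u * (1 - u) ≤ 1 / 4 := by
  nlinarith [sq_nonneg (2 * u - 1)]

section Region

variable {u v : ℝ}

lemma mul_one_sub_self_nonneg (hu : u ∈ Set.Icc (0 : ℝ) 1) : 0 ≤ u * (1 - u) :=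
  mul_nonneg hu.1 (sub_nonneg.2 hu.2)

/-- The expression is affine in `v`, so it suffices to check `v = ± 2`, where it equals
`4 - 6u - 2u²` and `4 - 2(1 - u)(4 - u)`. -/
lemma neg_linear_coeff_le_four (hu : u ∈ Set.Icc (0 : ℝ) 1) (hv : v ∈ Set.Icc (-2 : ℝ) 2) :
    -2 * (1 - 2 * u) * v + 2 * u * (1 - u) ≤ 4 := by
  obtain ⟨hu0, hu1⟩ := hu
  obtain ⟨hv0, hv1⟩ := hv
  nlinarith [mul_nonneg hu0 (sub_nonneg.2 hv1), mul_nonneg (sub_nonneg.2 hu1) (sub_nonneg.2 hv1),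
    mul_nonneg hu0 (neg_le_iff_add_nonneg.1 hv0),
    mul_nonneg (sub_nonneg.2 hu1) (neg_le_iff_add_nonneg.1 hv0)]

lemma linear_coeff_le_four (hu : u ∈ Set.Icc (0 : ℝ) 1) (hv : v ∈ Set.Icc (-2 : ℝ) 2) :
    2 * (1 - 2 * u) * v - 2 * u * (1 - u) ≤ 4 := by
  have hw : |1 - 2 * u| ≤ 1 := abs_le.2 ⟨by linarith [hu.2], by linarith [hu.1]⟩
  have hv' : |v| ≤ 2 := abs_le.2 hv
  have : (1 - 2 * u) * v ≤ 2 :=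
    calc (1 - 2 * u) * v ≤ |1 - 2 * u| * |v| := by rw [← abs_mul]; exact le_abs_self _
      _ ≤ 1 * 2 := mul_le_mul hw hv' (abs_nonneg _) zero_le_one
      _ = 2 := one_mul 2
  nlinarith [mul_one_sub_self_nonneg hu]

lemma linear_coeff_sq_le (hu : u ∈ Set.Icc (0 : ℝ) 1) (hv : v ∈ Set.Icc (-2 : ℝ) 2) :
    (2 * (1 - 2 * u) * v - 2 * u * (1 - u)) ^ 2 ≤ 4 ^ 2 :=
  sq_le_sq' (by linarith [neg_linear_coeff_le_four hu hv]) (linear_coeff_le_four hu hv)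

lemma discriminant_summand_le {N₀ : ℝ} (hv : v ∈ Set.Icc (-2 : ℝ) 2)
    (hN₀ : N₀ ≤ 0) : 8 * u * (1 - u) * (v ^ 2 - 2 * N₀) ≤ 2 * (4 - 2 * N₀) := by
  have hv2 : v ^ 2 ≤ 4 := by nlinarith [hv.1, hv.2]
  have hw : 0 ≤ v ^ 2 - 2 * N₀ := by nlinarith [sq_nonneg v]
  calc 8 * u * (1 - u) * (v ^ 2 - 2 * N₀) = 8 * (u * (1 - u)) * (v ^ 2 - 2 * N₀) := by ring
    _ ≤ 8 * (1 / 4) * (v ^ 2 - 2 * N₀) := by gcongr; exact mul_one_sub_self_le_quarter u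
    _ ≤ 2 * (4 - 2 * N₀) := by linarith

end Region

lemma neg_add_sqrt_sq_add_le {a b c d : ℝ} (ha : -a ≤ c) (ha2 : a ^ 2 ≤ c ^ 2) (hb : b ≤ d) :
    -a + √(a ^ 2 + b) ≤ c + √(c ^ 2 + d) :=
  add_le_add ha (Real.sqrt_le_sqrt (add_le_add ha2 hb))

lemma sqrt_four_sq_add_eq (N₀ : ℝ) : √(4 ^ 2 + 2 * (4 - 2 * N₀)) = 2 * √(6 - N₀) := by
  rw [show (4 : ℝ) ^ 2 + 2 * (4 - 2 * N₀) = 2 ^ 2 * (6 - N₀) by ring,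
    Real.sqrt_mul (sq_nonneg 2), Real.sqrt_sq zero_le_two]

/-- For all `u ∈ [0,1]`, `v ∈ [−2,2]` and `N₀ ≤ 0`, the larger root
`M₂` of the quadratic arising in the gradient dynamics of the traffic flow model with
linear interaction potential is bounded above by `1 + (1/2)√(6 − N₀)`.
In particular, the maximum of `−2(1−2u)v + 2u(1−u)` over `[0,1]×[−2,2]` equals `4`,
and `8u(1−u)(v² − 2N₀) ≤ 2(4 − 2N₀)` on this region. -/
theorem upper_bound_M2_linear_potential :
    (∀ u v N₀ : ℝ, u ∈ Set.Icc (0 : ℝ) 1 → v ∈ Set.Icc (-2 : ℝ) 2 → N₀ ≤ 0 →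
      (-(2*(1 - 2*u)*v - 2*u*(1 - u))
        + Real.sqrt ((2*(1 - 2*u)*v - 2*u*(1 - u))^2 + 8*u*(1 - u)*(v^2 - 2*N₀))) / 4
      ≤ 1 + (1/2) * Real.sqrt (6 - N₀)) ∧
    IsGreatest ((fun p : ℝ × ℝ => -2*(1 - 2*p.1)*p.2 + 2*p.1*(1 - p.1)) ''
      (Set.Icc (0 : ℝ) 1 ×ˢ Set.Icc (-2 : ℝ) 2)) 4 ∧
    (∀ u v N₀ : ℝ, u ∈ Set.Icc (0 : ℝ) 1 → v ∈ Set.Icc (-2 : ℝ) 2 → N₀ ≤ 0 →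
      8*u*(1 - u)*(v^2 - 2*N₀) ≤ 2*(4 - 2*N₀)) := by
  refine ⟨fun u v N₀ hu hv hN₀ => ?_, ⟨?_, ?_⟩, fun _ _ _ _ => discriminant_summand_le⟩
  · have key := neg_add_sqrt_sq_add_le (by linarith [neg_linear_coeff_le_four hu hv])
      (linear_coeff_sq_le hu hv) (discriminant_summand_le (u := u) hv hN₀)
    rw [sqrt_four_sq_add_eq] at key
    linarith
  · exact ⟨(0, -2), ⟨by norm_num, by norm_num⟩, by norm_num⟩
  · rintro _ ⟨⟨u, v⟩, ⟨hu, hv⟩, rfl⟩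
    exact neg_linear_coeff_le_four hu hv
end

section
/- Let γ > 0 and let u : [0,T)×ℝ → ℝ be a solution of the traffic flow model ∂_t u + ∂_x (u(1−u) e^{−ū}) = 0, where ū(t,x) = (1/γ)∫_x^{x+γ} u(t,y) dy, such that u is C¹ and d := ∂_x u is itself C¹ on [0,T)×ℝ. Then d satisfies pointwise the equation ∂_t d + (1−2u) e^{−ū} ∂_x d = e^{−ū} [ 2d² + 2(1−2u) ū_x d − u(1−u) (ū_x)² + u(1−u) ū_{xx} ], where ū_x(t,x) = ( u(t,x+γ) − u(t,x) ) / γ and ū_{xx}(t,x) = ( ∂_x u(t,x+γ) − ∂_x u(t,x) ) / γ. -/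
open Set

/-- The nonlocal average `ū(t,x) = (1/γ)∫_x^{x+γ} u(t,y) dy`. -/
noncomputable def ubar (γ : ℝ) (u : ℝ → ℝ → ℝ) (t x : ℝ) : ℝ :=
  (1/γ) * ∫ y in x..(x + γ), u t y

/-!
Differentiate the conservation law in `x`. Since `∂ₓu` is `C¹` in `(t, x)`, the mixed partials
commute: for each `x`, the Leibniz rule gives `∂ₜu(t, y) - ∂ₜu(t, x) = ∫ₓʸ ∂ₜ∂ₓu(t, z) dz`, so
`∂ₓ∂ₜu = ∂ₜ∂ₓu`. The equation says `∂ₜu = -∂ₓ(u(1-u)e^{-ū})`, and `∂ₓū = (u(·+γ) - u)/γ` by the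
fundamental theorem of calculus, so `∂ₜd` is minus the `x`-derivative of
`e^{-ū}(d(1-2u) - u(1-u)ū_x)`, which the product rule expands into the claimed right-hand side.
-/

open Filter Topology

theorem ContDiffOn.contDiff_slice {n : WithTop ℕ∞} {s : Set ℝ} {f : ℝ → ℝ → ℝ}
    (hf : ContDiffOn ℝ n (Function.uncurry f) (s ×ˢ univ)) {t : ℝ} (ht : t ∈ s) :
    ContDiff ℝ n (f t) := by
  rw [← contDiffOn_univ]
  exact hf.comp (contDiff_const.prodMk contDiff_id).contDiffOn fun y _ => ⟨ht, mem_univ y⟩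

section PartialDerivFst

variable {g : ℝ → ℝ → ℝ} {I : Set ℝ}

theorem hasDerivAt_fst_of_contDiffOn (hI : IsOpen I)
    (hg : ContDiffOn ℝ 1 (Function.uncurry g) (I ×ˢ univ)) {s : ℝ} (hs : s ∈ I) (y : ℝ) :
    HasDerivAt (fun s => g s y) (fderiv ℝ (Function.uncurry g) (s, y) (1, 0)) s := by
  have hdiff : DifferentiableAt ℝ (Function.uncurry g) (s, y) :=
    (hg.differentiableOn one_ne_zero).differentiableAt
      ((hI.prod isOpen_univ).mem_nhds ⟨hs, mem_univ y⟩)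
  exact hdiff.hasFDerivAt.comp_hasDerivAt s ((hasDerivAt_id s).prodMk (hasDerivAt_const s y))

theorem continuousOn_fderiv_fst_of_contDiffOn (hI : IsOpen I)
    (hg : ContDiffOn ℝ 1 (Function.uncurry g) (I ×ˢ univ)) :
    ContinuousOn (fun p => fderiv ℝ (Function.uncurry g) p (1, 0)) (I ×ˢ univ) :=
  (hg.continuousOn_fderiv_of_isOpen (hI.prod isOpen_univ) le_rfl).clm_apply continuousOn_const

theorem continuous_fderiv_fst_slice_of_contDiffOn (hI : IsOpen I)
    (hg : ContDiffOn ℝ 1 (Function.uncurry g) (I ×ˢ univ)) {t : ℝ} (ht : t ∈ I) :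
    Continuous fun z => fderiv ℝ (Function.uncurry g) (t, z) (1, 0) :=
  (continuousOn_fderiv_fst_of_contDiffOn hI hg).comp_continuous
    (continuous_const.prodMk continuous_id) fun z => ⟨ht, mem_univ z⟩

theorem hasDerivAt_intervalIntegral_of_contDiffOn (hI : IsOpen I)
    (hg : ContDiffOn ℝ 1 (Function.uncurry g) (I ×ˢ univ)) {t : ℝ} (ht : t ∈ I) (a b : ℝ) :
    HasDerivAt (fun s => ∫ z in a..b, g s z)
      (∫ z in a..b, fderiv ℝ (Function.uncurry g) (t, z) (1, 0)) t := by
  obtain ⟨ε, hε, hball⟩ := Metric.nhds_basis_closedBall.mem_iff.1 (hI.mem_nhds ht)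
  -- the `t`-derivative is bounded on a compact neighbourhood of `{t} × [a, b]`
  obtain ⟨C, hC⟩ := ((isCompact_closedBall t ε).prod isCompact_uIcc).exists_bound_of_continuousOn
    ((continuousOn_fderiv_fst_of_contDiffOn hI hg).mono (prod_mono hball (subset_univ _)))
  refine (intervalIntegral.hasDerivAt_integral_of_dominated_loc_of_deriv_le (bound := fun _ => C)
    (F' := fun s z => fderiv ℝ (Function.uncurry g) (s, z) (1, 0))
    (Metric.closedBall_mem_nhds t hε) ?_ ((hg.contDiff_slice ht).continuous.intervalIntegrable a b)
    (continuous_fderiv_fst_slice_of_contDiffOn hI hg ht).aestronglyMeasurable ?_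
    intervalIntegrable_const ?_).2
  · filter_upwards [hI.mem_nhds ht] with s hs
    exact (hg.contDiff_slice hs).continuous.aestronglyMeasurable
  · exact Eventually.of_forall fun z hz s hs => hC (s, z) ⟨hs, uIoc_subset_uIcc hz⟩
  · exact Eventually.of_forall fun z _ s hs => hasDerivAt_fst_of_contDiffOn hI hg (hball hs) z

end PartialDerivFst

/-- Schwarz's theorem in the form `∂ₓ∂ₜf = ∂ₜ∂ₓf`, assuming only that `∂ₓf` is jointly `C¹`. -/
theorem hasDerivAt_deriv_fst_comm {f : ℝ → ℝ → ℝ} {w : ℝ → ℝ} {I : Set ℝ} (hI : IsOpen I)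
    (hf : ∀ s ∈ I, Differentiable ℝ (f s))
    (hd : ContDiffOn ℝ 1 (Function.uncurry fun s y => deriv (f s) y) (I ×ˢ univ))
    {t : ℝ} (ht : t ∈ I) (hw : ∀ y, HasDerivAt (fun s => f s y) (w y) t) (x : ℝ) :
    HasDerivAt w (deriv (fun s => deriv (f s) x) t) x := by
  set dt := fun z => fderiv ℝ (Function.uncurry fun s y => deriv (f s) y) (t, z) (1, 0)
  have hdt : Continuous dt := continuous_fderiv_fst_slice_of_contDiffOn hI hd ht
  have hrep : ∀ y, w y = w x + ∫ z in x..y, dt z := by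
    intro y
    have hftc : (fun s => f s y - f s x) =ᶠ[𝓝 t] fun s => ∫ z in x..y, deriv (f s) z := by
      filter_upwards [hI.mem_nhds ht] with s hs
      rw [intervalIntegral.integral_deriv_eq_sub (fun z _ => hf s hs z)
        ((hd.contDiff_slice hs).continuous.intervalIntegrable x y)]
    have := ((hw y).sub (hw x)).unique
      ((hasDerivAt_intervalIntegral_of_contDiffOn hI hd ht x y).congr_of_eventuallyEq hftc)
    linarith
  rw [(hasDerivAt_fst_of_contDiffOn hI hd ht x).deriv]
  exact ((hdt.integral_hasStrictDerivAt x x).hasDerivAt.const_add (w x)).congr_of_eventuallyEq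
    (Eventually.of_forall hrep)

section TrafficFlow

variable {γ : ℝ} {u : ℝ → ℝ → ℝ} {t : ℝ}

theorem hasDerivAt_ubar (hc : Continuous (u t)) (x : ℝ) :
    HasDerivAt (ubar γ u t) ((u t (x + γ) - u t x) / γ) x := by
  have hprim : ∀ r, HasDerivAt (fun r => ∫ z in (0 : ℝ)..r, u t z) (u t r) r :=
    fun r => (hc.integral_hasStrictDerivAt 0 r).hasDerivAt
  have hsplit : ubar γ u t =
      fun y => 1 / γ * ((∫ z in (0 : ℝ)..(y + γ), u t z) - ∫ z in (0 : ℝ)..y, u t z) := by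
    funext y
    rw [ubar, intervalIntegral.integral_interval_sub_left (hc.intervalIntegrable _ _)
      (hc.intervalIntegrable _ _)]
  rw [hsplit]
  exact ((((hprim (x + γ)).comp_add_const x γ).sub (hprim x)).const_mul (1 / γ)).congr_deriv
    (by ring)

theorem hasDerivAt_exp_neg_ubar (hc : Continuous (u t)) (x : ℝ) :
    HasDerivAt (fun y => Real.exp (-ubar γ u t y))
      (Real.exp (-ubar γ u t x) * -((u t (x + γ) - u t x) / γ)) x :=
  (hasDerivAt_ubar hc x).neg.exp

noncomputable def fluxDeriv (γ : ℝ) (u : ℝ → ℝ → ℝ) (t y : ℝ) : ℝ :=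
  Real.exp (-ubar γ u t y) *
    (deriv (u t) y * (1 - 2 * u t y) - u t y * (1 - u t y) * ((u t (y + γ) - u t y) / γ))

theorem hasDerivAt_flux (hu : Differentiable ℝ (u t)) (x : ℝ) :
    HasDerivAt (fun y => u t y * (1 - u t y) * Real.exp (-ubar γ u t y)) (fluxDeriv γ u t x) x := by
  have hux := (hu x).hasDerivAt
  exact ((hux.mul ((hasDerivAt_const x 1).sub hux)).mul
    (hasDerivAt_exp_neg_ubar hu.continuous x)).congr_deriv
      (by simp only [fluxDeriv, Pi.mul_apply, Pi.sub_apply]; ring)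

theorem hasDerivAt_fluxDeriv (hu : Differentiable ℝ (u t))
    (hd : Differentiable ℝ (fun y => deriv (u t) y)) (x : ℝ) :
    HasDerivAt (fluxDeriv γ u t)
      (Real.exp (-ubar γ u t x) *
        ((1 - 2 * u t x) * deriv (fun y => deriv (u t) y) x
          - 2 * deriv (u t) x ^ 2
          - 2 * (1 - 2 * u t x) * ((u t (x + γ) - u t x) / γ) * deriv (u t) x
          + u t x * (1 - u t x) * ((u t (x + γ) - u t x) / γ) ^ 2
          - u t x * (1 - u t x) * ((deriv (u t) (x + γ) - deriv (u t) x) / γ))) x := by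
  have hux := (hu x).hasDerivAt
  have huxx := (hd x).hasDerivAt
  have hshift : HasDerivAt (fun y => (u t (y + γ) - u t y) / γ)
      ((deriv (u t) (x + γ) - deriv (u t) x) / γ) x :=
    (((hu (x + γ)).hasDerivAt.comp_add_const x γ).sub hux).div_const γ
  exact ((hasDerivAt_exp_neg_ubar hu.continuous x).mul
    ((huxx.mul ((hasDerivAt_const x 1).sub (hux.const_mul 2))).sub
      ((hux.mul ((hasDerivAt_const x 1).sub hux)).mul hshift))).congr_deriv
      (by simp only [Pi.mul_apply, Pi.sub_apply]; ring)

end TrafficFlow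

theorem gradient_dynamics_constant_potential_general
    (γ T : ℝ) (u : ℝ → ℝ → ℝ)
    (hu : ContDiffOn ℝ 1 (Function.uncurry u) (Ico 0 T ×ˢ univ))
    (hd : ContDiffOn ℝ 1 (Function.uncurry fun t x => deriv (u t) x) (Ico 0 T ×ˢ univ))
    (hPDE : ∀ t x : ℝ, t ∈ Ioo 0 T →
      deriv (fun s => u s x) t +
        deriv (fun y => u t y * (1 - u t y) * Real.exp (-(ubar γ u t y))) x = 0) :
    ∀ t x : ℝ, t ∈ Ioo 0 T →
      deriv (fun s => deriv (u s) x) t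
        + (1 - 2 * u t x) * Real.exp (-(ubar γ u t x)) * deriv (fun y => deriv (u t) y) x
      = Real.exp (-(ubar γ u t x)) *
          (2 * (deriv (u t) x)^2
            + 2 * (1 - 2 * u t x) * ((u t (x + γ) - u t x)/γ) * deriv (u t) x
            - u t x * (1 - u t x) * ((u t (x + γ) - u t x)/γ)^2
            + u t x * (1 - u t x) * ((deriv (u t) (x + γ) - deriv (u t) x)/γ)) := by
  intro t x ht
  have hIoo : Ioo 0 T ×ˢ univ ⊆ Ico 0 T ×ˢ (univ : Set ℝ) := prod_mono_left Ioo_subset_Ico_self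
  have hslice : ∀ s ∈ Ioo 0 T, Differentiable ℝ (u s) := fun s hs =>
    (hu.contDiff_slice (Ioo_subset_Ico_self hs)).differentiable one_ne_zero
  have hdt : Differentiable ℝ fun y => deriv (u t) y :=
    (hd.contDiff_slice (Ioo_subset_Ico_self ht)).differentiable one_ne_zero
  have hw := hasDerivAt_fst_of_contDiffOn isOpen_Ioo (hu.mono hIoo) ht
  have hwflux : (fun y => fderiv ℝ (Function.uncurry u) (t, y) (1, 0))
      = fun y => -fluxDeriv γ u t y := funext fun y => by
    have := hPDE t y ht
    rw [(hw y).deriv, (hasDerivAt_flux (hslice t ht) y).deriv] at this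
    linarith
  have hmixed := hasDerivAt_deriv_fst_comm isOpen_Ioo hslice (hd.mono hIoo) ht hw x
  rw [hwflux] at hmixed
  rw [hmixed.unique (hasDerivAt_fluxDeriv (hslice t ht) hdt x).neg]
  ring

/-- if `u` is a `C¹` solution of the traffic flow model
`∂ₜu + ∂ₓ(u(1−u)e^{−ū}) = 0` on `(0,T)×ℝ` whose gradient `d = ∂ₓu` is itself `C¹`,
then `d` satisfies pointwise
`∂ₜd + (1−2u)e^{−ū}∂ₓd = e^{−ū}[2d² + 2(1−2u)ū_x d − u(1−u)(ū_x)² + u(1−u)ū_xx]`,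
where `ū_x = (u(t,x+γ)−u(t,x))/γ` and `ū_xx = (∂ₓu(t,x+γ)−∂ₓu(t,x))/γ`. -/
theorem gradient_dynamics_constant_potential
    (γ T : ℝ) (hγ : 0 < γ) (hT : 0 < T) (u : ℝ → ℝ → ℝ)
    (hu : ContDiffOn ℝ 1 (Function.uncurry u) (Ico 0 T ×ˢ univ))
    (hd : ContDiffOn ℝ 1 (Function.uncurry fun t x => deriv (u t) x) (Ico 0 T ×ˢ univ))
    (hPDE : ∀ t x : ℝ, t ∈ Ioo 0 T →
      deriv (fun s => u s x) t +
        deriv (fun y => u t y * (1 - u t y) * Real.exp (-(ubar γ u t y))) x = 0) :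
    ∀ t x : ℝ, t ∈ Ioo 0 T →
      deriv (fun s => deriv (u s) x) t
        + (1 - 2 * u t x) * Real.exp (-(ubar γ u t x)) * deriv (fun y => deriv (u t) y) x
      = Real.exp (-(ubar γ u t x)) *
          (2 * (deriv (u t) x)^2
            + 2 * (1 - 2 * u t x) * ((u t (x + γ) - u t x)/γ) * deriv (u t) x
            - u t x * (1 - u t x) * ((u t (x + γ) - u t x)/γ)^2
            + u t x * (1 - u t x) * ((deriv (u t) (x + γ) - deriv (u t) x)/γ)) :=
  gradient_dynamics_constant_potential_general γ T u hu hd hPDE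
end
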